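/- arXiv:2601.21484 — 2 statements merged into one kernel-verified Lean document; each statement's English description precedes it below -/
import Mathlib

section
/- If |Ê(x) - E(x)| ≤ ε for all x, and E(x) ≥ c > ε for all x, then the self-normalized weights satisfy, for any nonnegative f with ‖f‖_∞ ≤ 1, |Σ_m ŵ_m f(x_m) - Σ_m w_m f(x_m)| ≤ 2ε/(c - ε), where w_m = E(x_m)/Σ_j E(x_j) and ŵ_m = Ê(x_m)/Σ_j Ê(x_j). -/
open Finset

/-- Perturbation stability of self-normalized weights. -/
theorem stmt_9 {X : Type*} (M : ℕ) (hM : 0 < M) (x : Fin M → X)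
    (E Ehat : X → ℝ) (c ε : ℝ) (hc : 0 < c) (hεc : ε < c)
    (hE_lb : ∀ y, c ≤ E y) (herr : ∀ y, |Ehat y - E y| ≤ ε)
    (f : X → ℝ) (hf_nonneg : ∀ y, 0 ≤ f y) (hf_le : ∀ y, f y ≤ 1)
    (w what : Fin M → ℝ)
    (hw : ∀ m, w m = E (x m) / ∑ j, E (x j))
    (hwhat : ∀ m, what m = Ehat (x m) / ∑ j, Ehat (x j)) :
    |(∑ m, what m * f (x m)) - ∑ m, w m * f (x m)| ≤ 2 * ε / (c - ε) := by
  have hε0 : 0 ≤ ε := le_trans (abs_nonneg _) (herr (x ⟨0, hM⟩))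
  have hcε : (0:ℝ) < c - ε := by linarith
  have hM' : (0:ℝ) < M := by exact_mod_cast hM
  set S := ∑ j, E (x j) with hS
  set T := ∑ j, Ehat (x j) with hT
  have hEhat_lb : ∀ y, c - ε ≤ Ehat y := fun y => by
    have h1 := (abs_le.mp (herr y)).1
    have h2 := hE_lb y
    linarith
  have hSlb : (M:ℝ) * c ≤ S := by
    calc (M:ℝ)*c = ∑ _j : Fin M, c := by simp [mul_comm]
    _ ≤ S := Finset.sum_le_sum (fun j _ => hE_lb (x j))
  have hTlb : (M:ℝ) * (c - ε) ≤ T := by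
    calc (M:ℝ)*(c-ε) = ∑ _j : Fin M, (c-ε) := by simp [mul_comm]; ring
    _ ≤ T := Finset.sum_le_sum (fun j _ => hEhat_lb (x j))
  have hSpos : 0 < S := lt_of_lt_of_le (by positivity) hSlb
  have hTpos : 0 < T := lt_of_lt_of_le (by positivity) hTlb
  set A := ∑ m, E (x m) * f (x m) with hA
  set B := ∑ m, Ehat (x m) * f (x m) with hB
  have h1 : ∑ m, w m * f (x m) = A / S := by
    simp only [hw, div_mul_eq_mul_div, ← Finset.sum_div, hA]
  have h2 : ∑ m, what m * f (x m) = B / T := by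
    simp only [hwhat, div_mul_eq_mul_div, ← Finset.sum_div, hB]
  have hBA : |B - A| ≤ M * ε := by
    rw [hA, hB, ← Finset.sum_sub_distrib]
    calc |∑ m, (Ehat (x m) * f (x m) - E (x m) * f (x m))|
        ≤ ∑ m, |Ehat (x m) * f (x m) - E (x m) * f (x m)| :=
          Finset.abs_sum_le_sum_abs _ _
      _ ≤ ∑ _m : Fin M, ε := by
          apply Finset.sum_le_sum
          intro m _
          rw [← sub_mul, abs_mul]
          calc |Ehat (x m) - E (x m)| * |f (x m)| ≤ ε * 1 := by
                apply mul_le_mul (herr _) _ (abs_nonneg _) hε0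
                rw [abs_of_nonneg (hf_nonneg _)]; exact hf_le _
            _ = ε := mul_one ε
      _ = M * ε := by simp [mul_comm]
  have hST : |S - T| ≤ M * ε := by
    rw [hS, hT, ← Finset.sum_sub_distrib]
    calc |∑ m, (E (x m) - Ehat (x m))| ≤ ∑ m, |E (x m) - Ehat (x m)| :=
          Finset.abs_sum_le_sum_abs _ _
      _ ≤ ∑ _m : Fin M, ε := by
          apply Finset.sum_le_sum
          intro m _
          rw [abs_sub_comm]; exact herr _
      _ = M * ε := by simp [mul_comm]
  have hA0 : 0 ≤ A := Finset.sum_nonneg fun m _ =>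
    mul_nonneg (le_trans hc.le (hE_lb _)) (hf_nonneg _)
  have hAS : A ≤ S := Finset.sum_le_sum fun m _ => by
    have := hE_lb (x m)
    nlinarith [hf_nonneg (x m), hf_le (x m)]
  have key : B / T - A / S = (B - A) / T + (A / S) * ((S - T) / T) := by
    field_simp
    ring
  rw [h1, h2, key]
  have hAS1 : A / S ≤ 1 := (div_le_one hSpos).mpr hAS
  have hAS0 : 0 ≤ A / S := div_nonneg hA0 hSpos.le
  calc |(B - A) / T + (A / S) * ((S - T) / T)|
      ≤ |(B - A) / T| + |(A / S) * ((S - T) / T)| := abs_add_le _ _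
    _ = |B - A| / T + (A / S) * (|S - T| / T) := by
        rw [abs_mul, abs_div, abs_div, abs_div, abs_of_pos hTpos,
          abs_of_pos hSpos, abs_of_nonneg hA0]
    _ ≤ (M * ε) / T + 1 * ((M * ε) / T) := by
        gcongr
    _ = 2 * (M * ε) / T := by ring
    _ ≤ 2 * (M * ε) / ((M:ℝ) * (c - ε)) := by
        apply div_le_div_of_nonneg_left (by positivity) (by positivity) hTlb
    _ = 2 * ε / (c - ε) := by
        field_simp
end

section
/- The backward transition of the tilted distribution factorizes as p(x_s | x_t, y) ∝ p_ref(x_s | x_t, y) · E_{p_ref(x_0 | y, x_s)}[exp(r(y, x_0)/λ)], for any s < t in a mask-respecting Markov chain where the tilted law is p(x_0|y) = p_ref(x_0|y)·exp(r(y,x_0)/λ)/C. -/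
open Finset

/-- Backward transition of the reward-tilted law factorizes as the reference backward
transition times the exponential-reward energy.  The generation process
`x₀ → x_s → x_t` is a Markov chain whose forward (masking) kernels `k₁, k₂` are shared
between the reference process and the tilted process; the two processes differ only in
the law of the clean sample `x₀`. -/
theorem stmt_12 {X0 Xs Xt : Type*} [Fintype X0] [Fintype Xs] [Fintype Xt]
    (pref0 : X0 → ℝ) (r : X0 → ℝ) (lam : ℝ) (hlam : 0 < lam)
    (k₁ : X0 → Xs → ℝ) (k₂ : Xs → Xt → ℝ)
    (hpref0_nonneg : ∀ x0, 0 ≤ pref0 x0) (hpref0_sum : ∑ x0, pref0 x0 = 1)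
    (hk₁_nonneg : ∀ x0 xs, 0 ≤ k₁ x0 xs) (hk₁_sum : ∀ x0, ∑ xs, k₁ x0 xs = 1)
    (hk₂_nonneg : ∀ xs xt, 0 ≤ k₂ xs xt) (hk₂_sum : ∀ xs, ∑ xt, k₂ xs xt = 1)
    -- normalization constant and tilted x₀-marginal
    (C : ℝ) (hC : C = ∑ x0, pref0 x0 * Real.exp (r x0 / lam))
    (tilted0 : X0 → ℝ) (htilted0 : ∀ x0, tilted0 x0 = pref0 x0 * Real.exp (r x0 / lam) / C)
    -- marginals of the reference and tilted chains
    (prefS : Xs → ℝ) (hprefS : ∀ xs, prefS xs = ∑ x0, pref0 x0 * k₁ x0 xs)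
    (prefT : Xt → ℝ) (hprefT : ∀ xt, prefT xt = ∑ xs, prefS xs * k₂ xs xt)
    (pS : Xs → ℝ) (hpS : ∀ xs, pS xs = ∑ x0, tilted0 x0 * k₁ x0 xs)
    (pT : Xt → ℝ) (hpT : ∀ xt, pT xt = ∑ xs, pS xs * k₂ xs xt)
    (hprefS_pos : ∀ xs, 0 < prefS xs)
    -- the energy term E(x_s) = E_{p_ref(x₀ | x_s)}[exp(r(x₀)/λ)]
    (energy : Xs → ℝ)
    (henergy : ∀ xs, energy xs =
      (∑ x0, pref0 x0 * k₁ x0 xs * Real.exp (r x0 / lam)) / prefS xs)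
    -- a fixed later state x_t with positive probability under both chains
    (xt : Xt) (hprefT_pos : 0 < prefT xt) (hpT_pos : 0 < pT xt) :
    ∃ c : ℝ, 0 < c ∧ ∀ xs : Xs,
      -- tilted backward transition p(x_s | x_t)
      (pS xs * k₂ xs xt / pT xt)
        = c * (prefS xs * k₂ xs xt / prefT xt) * energy xs := by
  have hCpos : 0 < C := by
    rw [hC]
    obtain ⟨x0, hx0⟩ : ∃ x0, 0 < pref0 x0 := by
      by_contra h
      push_neg at h
      have : ∑ x0, pref0 x0 = 0 := Finset.sum_eq_zero fun x _ =>
        le_antisymm (h x) (hpref0_nonneg x)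
      rw [hpref0_sum] at this; norm_num at this
    exact Finset.sum_pos' (fun i _ => mul_nonneg (hpref0_nonneg i) (Real.exp_pos _).le)
      ⟨x0, Finset.mem_univ x0, mul_pos hx0 (Real.exp_pos _)⟩
  have hpS' : ∀ xs, pS xs = prefS xs * energy xs / C := by
    intro xs
    have h1 : ∑ x0, tilted0 x0 * k₁ x0 xs
        = (∑ x0, pref0 x0 * k₁ x0 xs * Real.exp (r x0 / lam)) / C := by
      rw [Finset.sum_div]
      exact Finset.sum_congr rfl fun x _ => by rw [htilted0]; ring
    rw [hpS, h1, henergy, mul_div_assoc', mul_comm (prefS xs), mul_div_assoc _ (prefS xs),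
      div_self (ne_of_gt (hprefS_pos xs)), mul_one]
  refine ⟨prefT xt / (C * pT xt), div_pos hprefT_pos (mul_pos hCpos hpT_pos), fun xs => ?_⟩
  rw [hpS']
  field_simp
end
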